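/- arXiv:1402.5193 — 3 statements merged into one kernel-verified Lean document; each statement's English description precedes it below -/
import Mathlib

section
/- For every j with 0 ≤ j ≤ ν and every real x ≥ 0 one has φ^j_{L/K}(x) = min{ h + v_L(binom(h+n, p^{j₀})) + p^{j₀} x : 0 ≤ j₀ ≤ j, a_h ≠ 0 }. -/
/-!
By Kummer's theorem `v_p (binom m (p ^ j)) = v_p m - j` when `p ^ j ∣ m`. So for `a_h ≠ 0` and
`t = v_p (h + n) ≥ j₀` the term `h + v_L (binom (h + n) (p ^ j₀))` equals `h + (t - j₀) v_L(p)`,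
which dominates the term `ĩ_{min t ν} + (min t ν - j₀) v_L(p)` of the closed form of `i_{j₀}`
(recall `ĩ_ν = 0`); for `t ≤ j₀` it dominates `ĩ_{j₀} ≤ h`. Conversely, if `i_{j₀}` is attained
at `ĩ_{j₁} = h`, the term with `j' = min j₀ t ≤ j₀` is at most `i_{j₀}`, and `p ^ j' x ≤ p ^ j₀ x`.
-/

open scoped ENNReal

noncomputable section

/-- The additive valuation (with respect to powers of the prime element `π`) of an
element `x` of a discrete valuation ring: the largest `k` with `x ∈ (π^k)`
(`⊤` if `x = 0`). -/
def piVal {A : Type*} [CommRing A] (π : A) (x : A) : ℕ∞ :=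
  ⨆ k ∈ {k : ℕ | x ∈ Ideal.span {π ^ k}}, (k : ℕ∞)

/-- `ĩ_j = min {h ≥ 0 : v_p(h+n) ≤ j, a_h ≠ 0}` (`⊤` if no such `h` exists), where
`a_h` are the coefficients of the series `F̂(X) = Σ a_h X^{h+n}` with `π_K = F̂(π_L)`. -/
def itilde (p n : ℕ) {OK : Type*} [CommRing OK] (aF : ℕ → OK) (j : ℕ) : ℕ∞ :=
  ⨅ h ∈ {h : ℕ | padicValNat p (h + n) ≤ j ∧ aF h ≠ 0}, (h : ℕ∞)

/-- The `j`-th index of inseparability (closed form of the recursion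
`i_ν = ĩ_ν = 0`, `i_j = min(ĩ_j, i_{j+1} + v_L(p))`):
`i_j = min {ĩ_{j₁} + (j₁−j)·v_L(p) : j ≤ j₁ ≤ ν}`.  Here `vLp = v_L(p)`. -/
def insepIdx (p n ν : ℕ) {OK : Type*} [CommRing OK] (aF : ℕ → OK) (vLp : ℕ∞) (j : ℕ) : ℕ∞ :=
  ⨅ j1 ∈ Set.Icc j ν, (itilde p n aF j1 + ((j1 - j : ℕ) : ℕ∞) * vLp)

/-- The generalized Hasse–Herbrand function
`φ^j_{L/K}(x) = min {i_{j₀} + p^{j₀} x : 0 ≤ j₀ ≤ j}`, given the (finite,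
natural-number valued) indices of inseparability `iL`. -/
def hhPhi (p : ℕ) (iL : ℕ → ℕ) (j : ℕ) (x : ℝ) : ℝ :=
  sInf {y : ℝ | ∃ j0 ≤ j, y = iL j0 + (p : ℝ) ^ j0 * x}

theorem padicValNat_choose_add_eq_zero {p a b j : ℕ} [hp : Fact p.Prime] (ha : a < p ^ j)
    (hb : p ^ j ∣ b) : padicValNat p ((b + a).choose a) = 0 := by
  -- Kummer: adding `a < p ^ j` to a multiple of `p ^ j` in base `p` produces no carry.
  rw [padicValNat_choose' (lt_add_one _), Finset.card_eq_zero, Finset.filter_eq_empty_iff]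
  intro i _
  have hpi : 0 < p ^ i := pow_pos hp.out.pos i
  rw [not_le]
  rcases le_total i j with hij | hji
  · rw [Nat.mod_eq_zero_of_dvd ((pow_dvd_pow p hij).trans hb), add_zero]
    exact Nat.mod_lt _ hpi
  · obtain ⟨c, hc⟩ := (Nat.dvd_mod_iff (pow_dvd_pow p hji)).2 hb
    obtain ⟨q, hq⟩ := pow_dvd_pow p hji
    have hcq : c < q := by
      have := Nat.mod_lt b hpi
      rw [hc, hq] at this
      exact Nat.lt_of_mul_lt_mul_left this
    rw [Nat.mod_eq_of_lt (ha.trans_le (Nat.pow_le_pow_right hp.out.pos hji)), hc, hq]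
    calc a + p ^ j * c < p ^ j * (c + 1) := by rw [mul_add_one]; omega
      _ ≤ p ^ j * q := Nat.mul_le_mul_left _ hcq

theorem padicValNat_choose_prime_pow {p m j : ℕ} [hp : Fact p.Prime]
    (hj : j ≤ padicValNat p m) :
    padicValNat p (m.choose (p ^ j)) = padicValNat p m - j := by
  rcases eq_or_ne m 0 with rfl | hm
  · rw [padicValNat_zero_right, nonpos_iff_eq_zero] at hj
    simp [hj]
  have hpj : p ^ j ∣ m := (padicValNat_dvd_iff_le hm).2 hj
  have hle : p ^ j ≤ m := Nat.le_of_dvd (Nat.pos_of_ne_zero hm) hpj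
  have hpj0 : p ^ j ≠ 0 := pow_ne_zero _ hp.out.ne_zero
  have hcoprime : padicValNat p ((m - 1).choose (p ^ j - 1)) = 0 := by
    rw [show m - 1 = (m - p ^ j) + (p ^ j - 1) by omega]
    exact padicValNat_choose_add_eq_zero (by omega) (Nat.dvd_sub hpj dvd_rfl)
  -- `m * binom (m - 1) (p ^ j - 1) = binom m (p ^ j) * p ^ j`, the first binomial prime to `p`
  have key := Nat.add_one_mul_choose_eq (m - 1) (p ^ j - 1)
  rw [Nat.sub_add_cancel (by omega), Nat.sub_add_cancel (by omega)] at key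
  apply_fun padicValNat p at key
  rw [padicValNat.mul hm (Nat.choose_ne_zero (by omega)), hcoprime,
    padicValNat.mul (Nat.choose_ne_zero hle) hpj0, padicValNat.prime_pow] at key
  omega

section DiscreteValuationRing

open IsLocalRing
open IsDiscreteValuationRing (addVal addVal_le_iff_dvd addVal_mul addVal_pow addVal_eq_zero_iff)

theorem isUnit_natCast_of_coprime {R : Type*} [CommRing R] [IsLocalRing R] {p u : ℕ}
    (hpR : (p : R) ∈ maximalIdeal R) (hu : u.Coprime p) : IsUnit (u : R) := by
  obtain ⟨x, y, hxy⟩ := (Nat.isCoprime_iff_coprime.2 hu).map (Int.castRingHom R)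
  simp only [eq_intCast, Int.cast_natCast] at hxy
  refine (isUnit_or_isUnit_of_isUnit_add (hxy ▸ isUnit_one)).elim isUnit_of_mul_isUnit_right
    fun h => absurd (isUnit_of_mul_isUnit_right h) hpR

theorem algebraMap_mem_maximalIdeal {R S : Type*} [CommRing R] [IsDomain R]
    [IsDiscreteValuationRing R] [CommRing S] [IsLocalRing S] [Algebra R S] {πR : R} {πS : S}
    (hπR : Irreducible πR) (hπS : ¬IsUnit πS) {n : ℕ} (hn : n ≠ 0)
    (hram : Associated (algebraMap R S πR) (πS ^ n)) {x : R} (hx : x ∈ maximalIdeal R) :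
    algebraMap R S x ∈ maximalIdeal S := by
  rw [hπR.maximalIdeal_eq] at hx
  obtain ⟨c, rfl⟩ := Ideal.mem_span_singleton'.1 hx
  rw [map_mul]
  refine Ideal.mul_mem_left _ _ ?_
  rw [mem_maximalIdeal, mem_nonunits_iff, hram.isUnit_iff, isUnit_pow_iff hn]
  exact hπS

theorem ne_zero_of_associated_pow_of_sub_mem {R : Type*} [CommRing R] [IsDomain R]
    {π y c : R} (hπ : Irreducible π) {n : ℕ} (hy : Associated y (π ^ n))
    (hc : y - c * π ^ n ∈ Ideal.span {π ^ (n + 1)}) : c ≠ 0 := by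
  rintro rfl
  rw [zero_mul, sub_zero, Ideal.mem_span_singleton] at hc
  have := hc.trans hy.dvd
  rw [pow_dvd_pow_iff hπ.ne_zero hπ.not_isUnit] at this
  omega

variable {A : Type*} [CommRing A] [IsDomain A] [IsDiscreteValuationRing A] {π : A}

theorem piVal_eq_addVal (hπ : Irreducible π) (x : A) : piVal π x = addVal A x := by
  have hmem : ∀ k : ℕ, x ∈ Ideal.span {π ^ k} ↔ (k : ℕ∞) ≤ addVal A x := fun k => by
    rw [Ideal.mem_span_singleton, ← addVal_le_iff_dvd, hπ.addVal_pow]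
  simp only [piVal, Set.mem_ofPred_eq, hmem]
  exact le_antisymm (iSup₂_le fun _ h => h)
    (ENat.forall_natCast_le_iff_le.1 fun k hk => le_iSup₂_of_le k hk le_rfl)

theorem piVal_natCast (hπ : Irreducible π) {p : ℕ} [hp : Fact p.Prime]
    (hpA : (p : A) ∈ maximalIdeal A) {c : ℕ} (hc : c ≠ 0) :
    piVal π (c : A) = padicValNat p c * piVal π (p : A) := by
  obtain ⟨u, hu⟩ : p ^ padicValNat p c ∣ c := pow_padicValNat_dvd
  have hpu : ¬p ∣ u := fun ⟨w, hw⟩ =>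
    pow_succ_padicValNat_not_dvd hc ⟨w, by rw [pow_succ, mul_assoc, ← hw, ← hu]⟩
  have hunit := isUnit_natCast_of_coprime hpA ((Nat.coprime_comm.1
    ((Nat.Prime.coprime_iff_not_dvd hp.out).2 hpu)))
  rw [piVal_eq_addVal hπ, piVal_eq_addVal hπ]
  nth_rw 1 [hu]
  rw [Nat.cast_mul, Nat.cast_pow, addVal_mul, addVal_pow, addVal_eq_zero_iff.2 hunit,
    add_zero, nsmul_eq_mul]

end DiscreteValuationRing

section IndicesOfInseparability

variable {p n ν : ℕ} {OK : Type*} [CommRing OK] {aF : ℕ → OK} {e : ℕ∞}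

theorem itilde_le {j h : ℕ} (hh : padicValNat p (h + n) ≤ j) (ha : aF h ≠ 0) :
    itilde p n aF j ≤ h :=
  iInf₂_le h ⟨hh, ha⟩

theorem exists_itilde_eq {j : ℕ} (hfin : itilde p n aF j ≠ ⊤) :
    ∃ h, padicValNat p (h + n) ≤ j ∧ aF h ≠ 0 ∧ itilde p n aF j = h := by
  have hS : {h : ℕ | padicValNat p (h + n) ≤ j ∧ aF h ≠ 0}.Nonempty := by
    contrapose! hfin
    simp [itilde, hfin]
  obtain ⟨hval, hne⟩ := Nat.sInf_mem hS
  exact ⟨_, hval, hne, (ENat.natCast_sInf hS).symm⟩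

theorem insepIdx_le {j0 j1 : ℕ} (hj1 : j0 ≤ j1) (h1ν : j1 ≤ ν) :
    insepIdx p n ν aF e j0 ≤ itilde p n aF j1 + ((j1 - j0 : ℕ) : ℕ∞) * e :=
  iInf₂_le j1 ⟨hj1, h1ν⟩

theorem exists_insepIdx_eq {j0 : ℕ} (hj0 : j0 ≤ ν) :
    ∃ j1, j0 ≤ j1 ∧ j1 ≤ ν ∧
      insepIdx p n ν aF e j0 = itilde p n aF j1 + ((j1 - j0 : ℕ) : ℕ∞) * e := by
  obtain ⟨j1, ⟨hj01, hj1ν⟩, hmin⟩ := Set.exists_min_image (Set.Icc j0 ν)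
    (fun j1 => itilde p n aF j1 + ((j1 - j0 : ℕ) : ℕ∞) * e) (Set.finite_Icc _ _)
    ⟨j0, le_rfl, hj0⟩
  exact ⟨j1, hj01, hj1ν, le_antisymm (insepIdx_le hj01 hj1ν) (le_iInf₂ hmin)⟩

theorem insepIdx_le_add_padicValNat_choose_mul [Fact p.Prime] (hν : padicValNat p n = ν)
    (ha0 : aF 0 ≠ 0) {j0 h : ℕ} (hj0 : j0 ≤ ν) (hah : aF h ≠ 0) :
    insepIdx p n ν aF e j0 ≤ h + padicValNat p ((h + n).choose (p ^ j0)) * e := by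
  set t := padicValNat p (h + n)
  rcases le_or_gt t j0 with htj | htj
  · calc insepIdx p n ν aF e j0 ≤ itilde p n aF j0 + ((j0 - j0 : ℕ) : ℕ∞) * e :=
          insepIdx_le le_rfl hj0
      _ ≤ h := by simpa using itilde_le htj hah
      _ ≤ _ := le_self_add
  have hit : itilde p n aF (min t ν) ≤ h := by
    rcases le_total t ν with htν | hνt
    · rw [min_eq_left htν]
      exact itilde_le le_rfl hah
    · rw [min_eq_right hνt]
      exact (itilde_le (by simp [hν]) ha0).trans (by simp)
  calc insepIdx p n ν aF e j0
      ≤ itilde p n aF (min t ν) + ((min t ν - j0 : ℕ) : ℕ∞) * e :=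
        insepIdx_le (by omega) (min_le_right _ _)
    _ ≤ h + ((t - j0 : ℕ) : ℕ∞) * e := by gcongr; omega
    _ = _ := by rw [padicValNat_choose_prime_pow htj.le]

theorem exists_add_padicValNat_choose_mul_le_insepIdx [Fact p.Prime] {j0 : ℕ} (hj0 : j0 ≤ ν)
    (hfin : insepIdx p n ν aF e j0 ≠ ⊤) :
    ∃ j' ≤ j0, ∃ h, aF h ≠ 0 ∧
      h + padicValNat p ((h + n).choose (p ^ j')) * e ≤ insepIdx p n ν aF e j0 := by
  obtain ⟨j1, hj01, hj1ν, hi⟩ := exists_insepIdx_eq (aF := aF) (e := e) hj0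
  rw [hi] at hfin ⊢
  have hit : itilde p n aF j1 ≠ ⊤ := fun htop => hfin (by rw [htop, top_add])
  obtain ⟨h, ht, hah, hh⟩ := exists_itilde_eq hit
  refine ⟨min j0 (padicValNat p (h + n)), min_le_left _ _, h, hah, ?_⟩
  rw [padicValNat_choose_prime_pow (min_le_right _ _), hh]
  exact add_le_add le_rfl (mul_le_mul_left (Nat.cast_le.2 (by omega)) e)

theorem iInf_indices_add_pow_mul_eq [Fact p.Prime] (hν : padicValNat p n = ν)
    (ha0 : aF 0 ≠ 0) {iL : ℕ → ℕ} (hiL : ∀ j ≤ ν, (iL j : ℕ∞) = insepIdx p n ν aF e j)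
    {j : ℕ} (hj : j ≤ ν) (X : ℝ≥0∞) :
    ⨅ (j0 : ℕ) (_ : j0 ≤ j), ((iL j0 : ℝ≥0∞) + (p : ℝ≥0∞) ^ j0 * X) =
      ⨅ (j0 : ℕ) (_ : j0 ≤ j) (h : ℕ) (_ : aF h ≠ 0),
        ((h : ℝ≥0∞) + (((padicValNat p ((h + n).choose (p ^ j0)) : ℕ∞) * e : ℕ∞) : ℝ≥0∞)
          + (p : ℝ≥0∞) ^ j0 * X) := by
  apply le_antisymm
  · refine le_iInf₂ fun j0 hj0 => le_iInf₂ fun h hah => (iInf₂_le j0 hj0).trans ?_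
    have hle := insepIdx_le_add_padicValNat_choose_mul (e := e) hν ha0 (hj0.trans hj) hah
    rw [← hiL j0 (hj0.trans hj)] at hle
    gcongr
    exact_mod_cast ENat.toENNReal_le.2 hle
  · refine le_iInf₂ fun j0 hj0 => ?_
    obtain ⟨j', hj', h, hah, hle⟩ := exists_add_padicValNat_choose_mul_le_insepIdx (aF := aF)
      (e := e) (hj0.trans hj) (hiL j0 (hj0.trans hj) ▸ ENat.natCast_ne_top _)
    rw [← hiL j0 (hj0.trans hj)] at hle
    refine iInf₂_le_of_le j' (hj'.trans hj0) (iInf₂_le_of_le h hah (add_le_add ?_ ?_))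
    · exact_mod_cast ENat.toENNReal_le.2 hle
    · gcongr
      exact_mod_cast (Fact.out : p.Prime).one_le

end IndicesOfInseparability

theorem ofReal_hhPhi (p : ℕ) (iL : ℕ → ℕ) (j : ℕ) {x : ℝ} (hx : 0 ≤ x) :
    ENNReal.ofReal (hhPhi p iL j x) =
      ⨅ (j0 : ℕ) (_ : j0 ≤ j), ((iL j0 : ℝ≥0∞) + (p : ℝ≥0∞) ^ j0 * ENNReal.ofReal x) := by
  set g : ℕ → ℝ := fun j0 => iL j0 + (p : ℝ) ^ j0 * x
  have hS : {y : ℝ | ∃ j0 ≤ j, y = iL j0 + (p : ℝ) ^ j0 * x} = g '' Set.Iic j := by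
    ext y
    simp [g, eq_comm]
  rw [hhPhi, hS, Monotone.map_csInf_of_continuousAt ENNReal.continuous_ofReal.continuousAt
    (fun _ _ => ENNReal.ofReal_le_ofReal) (Set.nonempty_Iic.image g)
    ((Set.finite_Iic j).image g).bddBelow,
    Set.image_image, sInf_image]
  refine iInf_congr fun j0 => iInf_congr fun _ => ?_
  rw [ENNReal.ofReal_add (by positivity) (by positivity), ENNReal.ofReal_natCast,
    ENNReal.ofReal_mul (by positivity), ENNReal.ofReal_pow (by positivity), ENNReal.ofReal_natCast]

theorem stmt1_general
    (p : ℕ) [hp : Fact p.Prime]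
    -- the ring of integers of K : complete DVR with perfect residue field of char p
    (OK : Type) [CommRing OK] [IsDomain OK] [IsDiscreteValuationRing OK]
    [CharP (IsLocalRing.ResidueField OK) p]
    -- the ring of integers of L
    (OL : Type) [CommRing OL] [IsDomain OL] [IsDiscreteValuationRing OL]
    [Algebra OK OL]
    -- L/K is finite separable of degree n = a·p^ν with p ∤ a, n > 1
    (n a ν : ℕ) (hna : n = a * p ^ ν) (hpa : ¬ p ∣ a)
    -- uniformizers; L/K is totally ramified
    (πK : OK) (hπK : Irreducible πK) (πL : OL) (hπL : Irreducible πL)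
    (htot : Associated (algebraMap OK OL πK) (πL ^ n))
    -- the series F̂(X) = Σ_h a_h X^{h+n} with π_K = F̂(π_L)
    (aF : ℕ → OK)
    (hFeval : ∀ N : ℕ,
      algebraMap OK OL πK - ∑ h ∈ Finset.range N, algebraMap OK OL (aF h) * πL ^ (h + n)
        ∈ Ideal.span {πL ^ (n + N)})
    -- the indices of inseparability (finite since L/K is separable)
    (iL : ℕ → ℕ)
    (hiL : ∀ j ≤ ν, (iL j : ℕ∞) = insepIdx p n ν aF (piVal πL (p : OL)) j)
    (j : ℕ) (hj : j ≤ ν) (x : ℝ) (hx : 0 ≤ x) :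
    ENNReal.ofReal (hhPhi p iL j x) =
      ⨅ (j0 : ℕ) (_ : j0 ≤ j) (h : ℕ) (_ : aF h ≠ 0),
        ((h : ℝ≥0∞) + (piVal πL (((h + n).choose (p ^ j0) : ℕ) : OL) : ℝ≥0∞)
          + (p : ℝ≥0∞) ^ j0 * ENNReal.ofReal x) := by
  have ha : a ≠ 0 := by rintro rfl; exact hpa (dvd_zero p)
  have hpν : p ^ ν ∣ n := hna ▸ dvd_mul_left _ a
  have hn : n ≠ 0 := hna ▸ mul_ne_zero ha (pow_ne_zero _ hp.out.ne_zero)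
  have hν : padicValNat p n = ν := by
    rw [hna, padicValNat.mul ha (pow_ne_zero _ hp.out.ne_zero),
      padicValNat.eq_zero_of_not_dvd hpa, padicValNat.prime_pow, zero_add]
  have ha0 : aF 0 ≠ 0 := fun h0 => ne_zero_of_associated_pow_of_sub_mem hπL htot
    (by simpa using hFeval 1) (by rw [h0, map_zero])
  have hpL : (p : OL) ∈ IsLocalRing.maximalIdeal OL := by
    rw [← map_natCast (algebraMap OK OL)]
    exact algebraMap_mem_maximalIdeal hπK hπL.not_isUnit hn htot
      ((IsLocalRing.residue_eq_zero_iff _).1 (by rw [map_natCast, CharP.cast_eq_zero]))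
  rw [ofReal_hhPhi p iL j hx, iInf_indices_add_pow_mul_eq hν ha0 hiL hj]
  refine iInf_congr fun j0 => iInf_congr fun hj0 => iInf_congr fun h => iInf_congr fun _ => ?_
  have hchoose : p ^ j0 ≤ h + n := calc
    p ^ j0 ≤ p ^ ν := Nat.pow_le_pow_right hp.out.pos (hj0.trans hj)
    _ ≤ n := Nat.le_of_dvd (Nat.pos_of_ne_zero hn) hpν
    _ ≤ h + n := Nat.le_add_left n h
  rw [piVal_natCast hπL hpL (Nat.choose_ne_zero hchoose)]

/-- Proposition `newdef`.
With `K` a local field with perfect residue field of characteristic `p`,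
`L/K` a finite separable totally ramified extension of degree `n = a·p^ν > 1`
(`p ∤ a`), `F̂(X) = Σ_h a_h X^{h+n}` the unique series with Teichmüller
coefficients such that `π_K = F̂(π_L)`, and `i_0, …, i_ν` the indices of
inseparability: for `0 ≤ j ≤ ν` and every real `x ≥ 0`,
`φ^j_{L/K}(x) = min { h + v_L(binom (h+n) (p^{j₀})) + p^{j₀} x : 0 ≤ j₀ ≤ j, a_h ≠ 0 }`. -/
theorem stmt1
    (p : ℕ) [hp : Fact p.Prime]
    -- the ring of integers of K : complete DVR with perfect residue field of char p
    (OK : Type) [CommRing OK] [IsDomain OK] [IsDiscreteValuationRing OK]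
    [IsAdicComplete (IsLocalRing.maximalIdeal OK) OK]
    [CharP (IsLocalRing.ResidueField OK) p] [PerfectRing (IsLocalRing.ResidueField OK) p]
    -- the ring of integers of L
    (OL : Type) [CommRing OL] [IsDomain OL] [IsDiscreteValuationRing OL]
    [IsAdicComplete (IsLocalRing.maximalIdeal OL) OL]
    [Algebra OK OL]
    -- the fields K and L
    (K L : Type) [Field K] [Field L]
    [Algebra OK K] [IsFractionRing OK K]
    [Algebra OL L] [IsFractionRing OL L]
    [Algebra K L] [Algebra OK L] [IsScalarTower OK K L] [IsScalarTower OK OL L]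
    -- L/K is finite separable of degree n = a·p^ν with p ∤ a, n > 1
    [Algebra.IsSeparable K L] [FiniteDimensional K L]
    (n a ν : ℕ) (hna : n = a * p ^ ν) (hpa : ¬ p ∣ a) (hn1 : 1 < n)
    (hdeg : Module.finrank K L = n)
    -- uniformizers; L/K is totally ramified
    (πK : OK) (hπK : Irreducible πK) (πL : OL) (hπL : Irreducible πL)
    (htot : Associated (algebraMap OK OL πK) (πL ^ n))
    (hres : ∀ x : OL, ∃ y : OK, x - algebraMap OK OL y ∈ IsLocalRing.maximalIdeal OL)
    -- Teichmüller representatives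
    (TR : Set OK) (hTR0 : (0 : OK) ∈ TR)
    (hTRbij : Set.BijOn (IsLocalRing.residue OK) TR Set.univ)
    (hTRmul : ∀ r ∈ TR, ∀ s ∈ TR, r * s ∈ TR)
    -- the series F̂(X) = Σ_h a_h X^{h+n} with π_K = F̂(π_L)
    (aF : ℕ → OK) (haF : ∀ h, aF h ∈ TR)
    (hFeval : ∀ N : ℕ,
      algebraMap OK OL πK - ∑ h ∈ Finset.range N, algebraMap OK OL (aF h) * πL ^ (h + n)
        ∈ Ideal.span {πL ^ (n + N)})
    -- the indices of inseparability (finite since L/K is separable)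
    (iL : ℕ → ℕ)
    (hiL : ∀ j ≤ ν, (iL j : ℕ∞) = insepIdx p n ν aF (piVal πL (p : OL)) j)
    (j : ℕ) (hj : j ≤ ν) (x : ℝ) (hx : 0 ≤ x) :
    ENNReal.ofReal (hhPhi p iL j x) =
      ⨅ (j0 : ℕ) (_ : j0 ≤ j) (h : ℕ) (_ : aF h ≠ 0),
        ((h : ℝ≥0∞) + (piVal πL (((h + n).choose (p ^ j0) : ℕ) : OL) : ℝ≥0∞)
          + (p : ℝ≥0∞) ^ j0 * ENNReal.ofReal x) :=
  stmt1_general p (hp := hp) OK OL n a ν hna hpa πK hπK πL hπL htot aF hFeval iL hiL j hj x hx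
end
end

section
/- Let 0 ≤ j ≤ ν, let d ≥ c ≥ 0 be integers, let u ∈ O_L[ε_j]^× be a unit, and choose F(X) ∈ X^n·O_K[[X]] with F(π_L) = π_K. Then the following are equivalent: (1) F(π_L + u π_L^{c+1} ε_j) ≡ π_K (mod π_L^{n+d}); (2) there exists an A_d-algebra homomorphism s_d : B_d → B_d[ε_j] with s_d(π_L) = π_L + u π_L^{c+1} ε_j; (3) there exists an A_d-algebra homomorphism s_d : B_d → B_d[ε_j] with s_d ≡ id_{B_d} (mod π_L^{c+1} ε_j) and s_d ≢ id_{B_d} (mod π_L^{c+1} ε_j·(π_L, ε_j)). -/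
noncomputable section

/-- The ring `A[ε] = A[X]/(X^e)`; for `e = p^(j+1)` this is `A[ε_j]`. -/
abbrev EpsRing (A : Type*) [CommRing A] (e : ℕ) : Type _ :=
  Polynomial A ⧸ (Ideal.span {(Polynomial.X : Polynomial A) ^ e})

/-- The nilpotent element `ε` of `A[X]/(X^e)`. -/
def eps (A : Type*) [CommRing A] (e : ℕ) : EpsRing A e :=
  Ideal.Quotient.mk _ Polynomial.X

/-- The canonical map `A → A[X]/(X^e)`. -/
def epsC (A : Type*) [CommRing A] (e : ℕ) : A →+* EpsRing A e :=
  (Ideal.Quotient.mk _).comp Polynomial.C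

/-- Functoriality of `A ↦ A[X]/(X^e)` in `A`. -/
def epsMap {A B : Type*} [CommRing A] [CommRing B] (f : A →+* B) (e : ℕ) :
    EpsRing A e →+* EpsRing B e :=
  Ideal.Quotient.lift _ ((Ideal.Quotient.mk _).comp (Polynomial.mapRingHom f))
    (by
      intro a ha
      rw [Ideal.mem_span_singleton] at ha
      obtain ⟨g, rfl⟩ := ha
      rw [RingHom.comp_apply, Ideal.Quotient.eq_zero_iff_mem, Ideal.mem_span_singleton]
      simp only [Polynomial.coe_mapRingHom, Polynomial.map_mul, Polynomial.map_pow,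
        Polynomial.map_X]
      exact Dvd.intro _ rfl)

/-!
Let `x` be the image of `π_L` in `B_d` and `G = F_{<n+d} - π_K`, with `F_{<n+d}` the truncation
of `F`. Since `O_L` and `O_K` have the same residue field, `x` generates `B_d` over `O_K`, and the
kernel of `O_K[X] → B_d`, `X ↦ x`, is `(G, X^{n+d})`: if `f(π_L) ≡ 0 mod π_L^{m+1}` then
`π_K ∣ f(0)`, and as `π_K ≡ -G mod X^n` we get `f = X Q - G h` with `Q(π_L) ≡ 0 mod π_L^m`.
Hence for `z` with `z^{n+d} = 0` there is an `A_d`-algebra map `B_d → B_d[ε]` with `x ↦ z` iff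
`G(z) = 0`, which is (1) ⇔ (2).

A map with `s ≡ id mod π_L^{c+1} ε` has `s(x) = x + ρ ε v` with `ρ = π_L^{c+1}`, and it is
`≢ id mod π_L^{c+1} ε (π_L, ε)` exactly when `v` is a unit. Whether `x + ρ ε v` is a root of `G`
does not depend on the unit `v`: it says `X^{p^{j+1}} ∣ G(x + ρ X) - G(x)`, and the substitution
`X ↦ X v` preserves divisibility by powers of `X`. This gives (2) ⇔ (3).
-/

open Polynomial

theorem Polynomial.X_pow_dvd_comp_X_mul_iff {R : Type*} [CommRing R] {T : R[X]}
    (hT : IsUnit (T.coeff 0)) {Q : R[X]} {e : ℕ} : X ^ e ∣ Q.comp (X * T) ↔ X ^ e ∣ Q := by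
  induction e generalizing Q with
  | zero => simp
  | succ e ih =>
    refine ⟨fun h => ?_, fun ⟨R', hR'⟩ => ?_⟩
    · obtain ⟨R', rfl⟩ := ih.mp (dvd_trans (pow_dvd_pow X e.le_succ) h)
      have hcomp : (X ^ e * R').comp (X * T) = X ^ e * (T ^ e * R'.comp (X * T)) := by
        simp only [mul_comp, X_pow_comp]; ring
      rw [hcomp, pow_succ, (isRegular_X_pow e).left.dvd_cancel_left, X_dvd_iff,
        coeff_zero_eq_eval_zero, eval_mul, eval_pow, eval_comp, eval_mul, eval_X, zero_mul,
        ← coeff_zero_eq_eval_zero, ← coeff_zero_eq_eval_zero] at h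
      rw [pow_succ, (isRegular_X_pow e).left.dvd_cancel_left, X_dvd_iff]
      exact (hT.pow e).mul_right_eq_zero.mp h
    · rw [hR', mul_comp, X_pow_comp, mul_pow, mul_assoc]
      exact dvd_mul_right _ _

namespace EpsRing

variable {A B : Type*} [CommRing A] [CommRing B] {e : ℕ}

abbrev mk (A : Type*) [CommRing A] (e : ℕ) : A[X] →+* EpsRing A e := Ideal.Quotient.mk _

theorem mk_eq_zero_iff {P : A[X]} : mk A e P = 0 ↔ X ^ e ∣ P := by
  rw [Ideal.Quotient.eq_zero_iff_mem, Ideal.mem_span_singleton]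

theorem epsC_apply (a : A) : epsC A e a = mk A e (C a) := rfl

theorem eps_def : eps A e = mk A e X := rfl

theorem eps_pow_eq_zero : eps A e ^ e = 0 := by
  rw [eps_def, ← map_pow, mk_eq_zero_iff]

theorem algebraMap_eq_epsC : algebraMap A (EpsRing A e) = epsC A e := rfl

theorem epsMap_epsC (f : A →+* B) (a : A) : epsMap f e (epsC A e a) = epsC B e (f a) := by
  simp [epsC_apply, epsMap]

theorem epsMap_eps (f : A →+* B) : epsMap f e (eps A e) = eps B e := by
  simp [eps_def, epsMap]

theorem epsMap_eq_zero_iff {f : A →+* B} (hf : Function.Surjective f) {a : A}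
    (hker : RingHom.ker f = Ideal.span {a}) {y : EpsRing A e} :
    epsMap f e y = 0 ↔ y ∈ Ideal.span {epsC A e a} := by
  refine ⟨fun hy => ?_, fun hy => ?_⟩
  · obtain ⟨P, rfl⟩ := Ideal.Quotient.mk_surjective y
    obtain ⟨H', hH'⟩ := mk_eq_zero_iff.mp hy
    obtain ⟨H, rfl⟩ := map_surjective f hf H'
    have hPH : P - X ^ e * H ∈ Ideal.span {C a} := by
      rw [← Set.image_singleton, ← Ideal.map_span, ← hker, ← Polynomial.ker_mapRingHom,
        RingHom.mem_ker, coe_mapRingHom, Polynomial.map_sub, Polynomial.map_mul,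
        Polynomial.map_pow, map_X, sub_eq_zero]
      exact hH'
    obtain ⟨G, hG⟩ := Ideal.mem_span_singleton.mp hPH
    have hmk : mk A e P = epsC A e a * mk A e G := by
      rw [epsC_apply, ← map_mul, ← hG, map_sub, map_mul, map_pow, ← eps_def, eps_pow_eq_zero,
        zero_mul, sub_zero]
    exact Ideal.mem_span_singleton.mpr ⟨_, hmk⟩
  · obtain ⟨w, rfl⟩ := Ideal.mem_span_singleton.mp hy
    have hf0 : f a = 0 := RingHom.mem_ker.mp (hker ▸ Ideal.mem_span_singleton_self a)
    rw [map_mul, epsMap_epsC, hf0, map_zero, zero_mul]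

theorem epsMap_aeval {R : Type*} [CommRing R] [Algebra R A] [Algebra R B] (f : A →ₐ[R] B)
    (z : EpsRing A e) (P : R[X]) :
    epsMap (f : A →+* B) e (aeval z P) = aeval (epsMap (f : A →+* B) e z) P := by
  rw [aeval_def, aeval_def, hom_eval₂]
  congr 1
  ext r
  exact (epsMap_epsC _ (algebraMap R A r)).trans (congrArg _ (f.commutes r))

theorem aeval_epsMap_eq_zero_iff {R : Type*} [CommRing R] [Algebra R A] [Algebra R B]
    {f : A →ₐ[R] B} (hf : Function.Surjective f) {a : A} (hker : RingHom.ker f = Ideal.span {a})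
    (z : EpsRing A e) (P : R[X]) :
    aeval (epsMap (f : A →+* B) e z) P = 0 ↔ aeval z P ∈ Ideal.span {epsC A e a} := by
  rw [← epsMap_aeval]
  exact epsMap_eq_zero_iff hf hker

theorem epsC_add_mul_eps_mul_pow_eq_zero {x : A} {N : ℕ} (hx : x ^ N = 0) (c : ℕ)
    (v : EpsRing A e) : (epsC A e x + epsC A e (x ^ (c + 1)) * eps A e * v) ^ N = 0 := by
  have hfac : epsC A e x + epsC A e (x ^ (c + 1)) * eps A e * v =
      epsC A e x * (1 + epsC A e x ^ c * eps A e * v) := by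
    rw [map_pow]; ring
  rw [hfac, mul_pow, ← map_pow, hx, map_zero, zero_mul]

theorem isUnit_coeff_zero_of_isUnit_mk (he : 0 < e) {T : A[X]} (hT : IsUnit (mk A e T)) :
    IsUnit (T.coeff 0) := by
  let ev : EpsRing A e →+* A := Ideal.Quotient.lift _ constantCoeff fun P hP => by
    obtain ⟨Q, rfl⟩ := Ideal.mem_span_singleton.mp hP
    simp [he.ne]
  exact hT.map ev

theorem aeval_eps_mul_eq_zero_iff {t : EpsRing A e} (ht : IsUnit t) {Q : A[X]} :
    aeval (eps A e * t) Q = 0 ↔ X ^ e ∣ Q := by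
  rcases Nat.eq_zero_or_pos e with rfl | he
  · have hzero (y : EpsRing A 0) : y = 0 := by
      obtain ⟨P, rfl⟩ := Ideal.Quotient.mk_surjective y
      exact mk_eq_zero_iff.mpr (by simp)
    simp [hzero]
  obtain ⟨T, rfl⟩ := Ideal.Quotient.mk_surjective t
  rw [eps_def, ← map_mul, ← Ideal.Quotient.mkₐ_eq_mk A, aeval_algHom_apply,
    Ideal.Quotient.mkₐ_eq_mk, ← comp_eq_aeval, mk_eq_zero_iff,
    X_pow_dvd_comp_X_mul_iff (isUnit_coeff_zero_of_isUnit_mk he ht)]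

theorem aeval_add_mul_eps_mul_eq_iff (P : A[X]) (x ρ : A) {t t' : EpsRing A e}
    (ht : IsUnit t) (ht' : IsUnit t') :
    aeval (epsC A e x + epsC A e ρ * eps A e * t) P = epsC A e (P.eval x) ↔
      aeval (epsC A e x + epsC A e ρ * eps A e * t') P = epsC A e (P.eval x) := by
  have key {s : EpsRing A e} (hs : IsUnit s) :
      aeval (epsC A e x + epsC A e ρ * eps A e * s) P = epsC A e (P.eval x) ↔
        X ^ e ∣ P.comp (C x + C ρ * X) - C (P.eval x) := by
    rw [← aeval_eps_mul_eq_zero_iff hs, map_sub, aeval_comp, aeval_C, sub_eq_zero]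
    simp only [map_add, map_mul, aeval_C, aeval_X, algebraMap_eq_epsC, mul_assoc]
  rw [key ht, key ht']

theorem mem_span_epsC_eps_of_not_isUnit {x : A}
    (hx : ∀ a : A, ¬IsUnit a → a ∈ Ideal.span {x}) {v : EpsRing A e} (hv : ¬IsUnit v) :
    v ∈ Ideal.span {epsC A e x, eps A e} := by
  obtain ⟨V, rfl⟩ := Ideal.Quotient.mk_surjective v
  have hV : mk A e V = epsC A e (V.coeff 0) + eps A e * mk A e V.divX := by
    rw [epsC_apply, eps_def, ← map_mul, ← map_add, add_comm, X_mul_divX_add]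
  have hV0 : ¬IsUnit (V.coeff 0) := fun hu => hv <| hV ▸
    IsNilpotent.isUnit_add_left_of_commute
      ⟨e, by rw [mul_pow, eps_pow_eq_zero, zero_mul]⟩ (hu.map _) (Commute.all _ _)
  obtain ⟨a, ha⟩ := Ideal.mem_span_singleton.mp (hx _ hV0)
  rw [hV, ha, map_mul, Ideal.mem_span_pair]
  exact ⟨epsC A e a, mk A e V.divX, by ring⟩

theorem mem_span_mul_of_epsC_mul_eps_mem (he : 1 < e) {a b : A}
    (h : epsC A e a * eps A e ∈
      Ideal.span {epsC A e a * eps A e} * Ideal.span {epsC A e b, eps A e}) :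
    a ∈ Ideal.span {a * b} := by
  obtain ⟨z, hz, hza⟩ := Ideal.mem_span_singleton_mul.mp h
  obtain ⟨α, β, rfl⟩ := Ideal.mem_span_pair.mp hz
  obtain ⟨P, rfl⟩ := Ideal.Quotient.mk_surjective α
  obtain ⟨Q, rfl⟩ := Ideal.Quotient.mk_surjective β
  have hdvd : X ^ e ∣ X * (C a * (P * C b + Q * X) - C a) := by
    rw [← mk_eq_zero_iff, ← sub_eq_zero.mpr hza]
    simp only [epsC_apply, eps_def, ← map_mul, ← map_add, ← map_sub]
    ring_nf
  have h1 := X_pow_dvd_iff.mp hdvd 1 he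
  simp only [coeff_X_mul, coeff_sub, coeff_add, mul_coeff_zero, coeff_C_zero,
    coeff_X_zero, mul_zero, add_zero] at h1
  exact Ideal.mem_span_singleton.mpr ⟨P.coeff 0, by linear_combination -h1⟩

end EpsRing

theorem exists_ringHom_and_iff_exists_algHom {A B S : Type*} [CommSemiring A] [Semiring B]
    [Semiring S] [Algebra A B] [Algebra A S] {P : (B →+* S) → Prop} :
    (∃ s : B →+* S, (∀ a, s (algebraMap A B a) = algebraMap A S a) ∧ P s) ↔
      ∃ s : B →ₐ[A] S, P s :=
  ⟨fun ⟨s, hs, hP⟩ => ⟨{ s with commutes' := hs }, hP⟩, fun ⟨s, hP⟩ => ⟨s, s.commutes, hP⟩⟩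

section Generated

variable {A B S : Type*} [CommRing A] [CommRing B] [CommRing S] [Algebra A B] [Algebra A S]
  {x : B}

theorem exists_algHom_apply_eq_iff_ker_le (hx : Function.Surjective (aeval x : A[X] →ₐ[A] B))
    (z : S) : (∃ s : B →ₐ[A] S, s x = z) ↔
      RingHom.ker (aeval x : A[X] →ₐ[A] B) ≤ RingHom.ker (aeval z : A[X] →ₐ[A] S) := by
  refine ⟨fun ⟨s, hs⟩ f hf => ?_, fun h => ⟨AlgHom.liftOfSurjective _ hx _ h, ?_⟩⟩
  · rw [RingHom.mem_ker] at hf ⊢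
    rw [← hs, aeval_algHom_apply, hf, map_zero]
  · simpa using AlgHom.liftOfSurjective_apply _ hx _ h X

theorem exists_algHom_apply_eq_iff_aeval_eq_zero
    (hx : Function.Surjective (aeval x : A[X] →ₐ[A] B)) {G : A[X]} {N : ℕ}
    (hker : RingHom.ker (aeval x : A[X] →ₐ[A] B) = Ideal.span {G, X ^ N}) {z : S}
    (hz : z ^ N = 0) : (∃ s : B →ₐ[A] S, s x = z) ↔ aeval z G = 0 := by
  rw [exists_algHom_apply_eq_iff_ker_le hx, hker, Ideal.span_le, Set.insert_subset_iff,
    Set.singleton_subset_iff]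
  simp [hz]

theorem forall_sub_mem_iff_sub_mem (hx : Function.Surjective (aeval x : A[X] →ₐ[A] B))
    (s t : B →ₐ[A] S) (I : Ideal S) : (∀ b, s b - t b ∈ I) ↔ s x - t x ∈ I := by
  refine ⟨fun h => h x, fun h b => ?_⟩
  obtain ⟨f, rfl⟩ := hx b
  rw [← Ideal.Quotient.eq] at h ⊢
  have hmk (y : S) : Ideal.Quotient.mk I (aeval y f) = aeval (Ideal.Quotient.mk I y) f :=
    (aeval_algHom_apply (Ideal.Quotient.mkₐ A I) y f).symm
  rw [← aeval_algHom_apply s, ← aeval_algHom_apply t, hmk, hmk, h]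

theorem exists_algHom_apply_eq_add_mul_eps_mul_iff {e : ℕ}
    (hx : Function.Surjective (aeval x : A[X] →ₐ[A] B)) (ρ : B) {t t' : EpsRing B e}
    (ht : IsUnit t) (ht' : IsUnit t') :
    (∃ s : B →ₐ[A] EpsRing B e, s x = epsC B e x + epsC B e ρ * eps B e * t) ↔
      ∃ s : B →ₐ[A] EpsRing B e, s x = epsC B e x + epsC B e ρ * eps B e * t' := by
  have key {f : A[X]} (hf : aeval x f = 0) (z : EpsRing B e) :
      aeval z f = 0 ↔ aeval z (f.map (algebraMap A B)) =
        epsC B e ((f.map (algebraMap A B)).eval x) := by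
    rw [aeval_map_algebraMap, eval_map_algebraMap, hf, map_zero]
  simp only [exists_algHom_apply_eq_iff_ker_le hx, SetLike.le_def]
  refine forall₂_congr fun f hf => ?_
  rw [RingHom.mem_ker] at hf
  rw [RingHom.mem_ker, RingHom.mem_ker, key hf, key hf]
  exact EpsRing.aeval_add_mul_eps_mul_eq_iff _ x ρ ht ht'

theorem exists_algHom_sub_mem_and_not_mem_mul_iff {e : ℕ}
    (hx : Function.Surjective (aeval x : A[X] →ₐ[A] B)) (he : 1 < e)
    (hloc : ∀ b : B, ¬IsUnit b → b ∈ Ideal.span {x}) {ρ : B}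
    (hρ : ρ ∉ Ideal.span {ρ * x}) {u : EpsRing B e} (hu : IsUnit u) :
    (∃ s : B →ₐ[A] EpsRing B e,
        (∀ b, s b - epsC B e b ∈ Ideal.span {epsC B e ρ * eps B e}) ∧
        ¬ ∀ b, s b - epsC B e b ∈
          Ideal.span {epsC B e ρ * eps B e} * Ideal.span {epsC B e x, eps B e}) ↔
      ∃ s : B →ₐ[A] EpsRing B e, s x = epsC B e x + epsC B e ρ * eps B e * u := by
  have hsub (s : B →ₐ[A] EpsRing B e) (I : Ideal (EpsRing B e)) :
      (∀ b, s b - epsC B e b ∈ I) ↔ s x - epsC B e x ∈ I :=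
    forall_sub_mem_iff_sub_mem hx s (IsScalarTower.toAlgHom A B _) I
  simp only [hsub]
  constructor
  · rintro ⟨s, hs, hs'⟩
    obtain ⟨v, hv⟩ := Ideal.mem_span_singleton.mp hs
    have hv_unit : IsUnit v := by
      by_contra hv'
      exact hs' (hv ▸ Ideal.mul_mem_mul (Ideal.mem_span_singleton_self _)
        (EpsRing.mem_span_epsC_eps_of_not_isUnit hloc hv'))
    exact (exists_algHom_apply_eq_add_mul_eps_mul_iff hx ρ hv_unit hu).mp
      ⟨s, by rw [← hv, add_sub_cancel]⟩
  · rintro ⟨s, hs⟩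
    have hsx : s x - epsC B e x = epsC B e ρ * eps B e * u := by rw [hs, add_sub_cancel_left]
    refine ⟨s, hsx ▸ Ideal.mul_mem_right _ _ (Ideal.mem_span_singleton_self _), fun h => hρ ?_⟩
    exact EpsRing.mem_span_mul_of_epsC_mul_eps_mem he
      ((Ideal.mul_unit_mem_iff_mem _ hu).mp (hsx ▸ h))

end Generated

theorem PowerSeries.aeval_trunc_eq_sum_range {R S : Type*} [CommRing R] [CommRing S]
    [Algebra R S] (F : PowerSeries R) (N : ℕ) (z : S) :
    Polynomial.aeval z (trunc N F) = ∑ i ∈ Finset.range N, algebraMap R S (coeff i F) * z ^ i := by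
  rw [aeval_def, eval₂_trunc_eq_sum_range]

theorem exists_aeval_sub_mem_span_pow {A R : Type*} [CommRing A] [CommRing R] [Algebra A R]
    {π : R} (h : ∀ r : R, ∃ a : A, r - algebraMap A R a ∈ Ideal.span {π}) (m : ℕ) (r : R) :
    ∃ f : A[X], r - aeval π f ∈ Ideal.span {π ^ m} := by
  induction m generalizing r with
  | zero => exact ⟨0, by simp⟩
  | succ m ih =>
    obtain ⟨a, ha⟩ := h r
    obtain ⟨r', hr'⟩ := Ideal.mem_span_singleton'.mp ha
    obtain ⟨f, hf⟩ := ih r'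
    obtain ⟨g, hg⟩ := Ideal.mem_span_singleton'.mp hf
    refine ⟨C a + X * f, Ideal.mem_span_singleton'.mpr ⟨g, ?_⟩⟩
    simp only [map_add, map_mul, aeval_C, aeval_X]
    linear_combination π * hg + hr'

section Valuation

variable {OK OL : Type*} [CommRing OK] [IsDomain OK] [IsDiscreteValuationRing OK]
  [CommRing OL] [Algebra OK OL] {πK : OK} {πL : OL}

theorem Irreducible.dvd_of_algebraMap_mem_span (hπK : Irreducible πK) (hπL : ¬IsUnit πL)
    {a : OK} (ha : algebraMap OK OL a ∈ Ideal.span {πL}) : πK ∣ a := by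
  rw [← Ideal.mem_span_singleton, ← hπK.maximalIdeal_eq, IsLocalRing.mem_maximalIdeal,
    mem_nonunits_iff]
  exact fun hu => hπL (Ideal.span_singleton_eq_top.mp (Ideal.eq_top_of_isUnit_mem _ ha (hu.map _)))

theorem mem_span_of_aeval_mem_span_pow [IsDomain OL] (hπK : Irreducible πK)
    (hπL : Irreducible πL) {n N : ℕ} (hn : 0 < n) {G : OK[X]} (hG : X ^ n ∣ G + C πK)
    (hGN : aeval πL G ∈ Ideal.span {πL ^ N}) {m : ℕ} (hm : m ≤ N) {f : OK[X]}
    (hf : aeval πL f ∈ Ideal.span {πL ^ m}) : f ∈ Ideal.span {G, X ^ m} := by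
  induction m generalizing f with
  | zero => exact Ideal.mem_span_pair.mpr ⟨0, f, by simp⟩
  | succ m ih =>
    have hf_eq := X_mul_divX_add f
    obtain ⟨h, hh⟩ := hπK.dvd_of_algebraMap_mem_span hπL.not_isUnit (a := f.coeff 0) <| by
      have h0 : aeval πL f = πL * aeval πL f.divX + algebraMap OK OL (f.coeff 0) := by
        simpa only [map_add, map_mul, aeval_X, aeval_C] using (congrArg (aeval πL) hf_eq).symm
      rw [eq_sub_of_add_eq' h0.symm]
      refine sub_mem ?_ (Ideal.mul_mem_right _ _ (Ideal.mem_span_singleton_self _))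
      exact Ideal.span_singleton_le_span_singleton.mpr (dvd_pow_self _ m.succ_ne_zero) hf
    obtain ⟨w, hw⟩ := hG
    set Q := f.divX + X ^ (n - 1) * w * C h
    have hfQ : f = X * Q - G * C h := by
      have hXn : (X : OK[X]) ^ n = X * X ^ (n - 1) := by rw [← pow_succ', Nat.sub_add_cancel hn]
      rw [hh, C_mul] at hf_eq
      linear_combination -hf_eq + C h * hw + C h * w * hXn
    have hQ : aeval πL Q ∈ Ideal.span {πL ^ m} := by
      have hπQ : πL * aeval πL Q = aeval πL f + aeval πL G * algebraMap OK OL h := by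
        conv_rhs => rw [hfQ]
        simp
      have : πL * aeval πL Q ∈ Ideal.span {πL ^ (m + 1)} := by
        rw [hπQ]
        refine add_mem hf (Ideal.mul_mem_right _ _ ?_)
        exact Ideal.span_singleton_le_span_singleton.mpr (pow_dvd_pow _ hm) hGN
      rw [Ideal.mem_span_singleton, pow_succ', mul_dvd_mul_iff_left hπL.ne_zero] at this
      exact Ideal.mem_span_singleton.mpr this
    obtain ⟨α, β, hαβ⟩ := Ideal.mem_span_pair.mp (ih (by omega) hQ)
    exact Ideal.mem_span_pair.mpr ⟨X * α - C h, β, by linear_combination X * hαβ - hfQ⟩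

end Valuation

section Truncation

variable {OK OL : Type*} [CommRing OK] [CommRing OL] [Algebra OK OL] {πL : OL} {N : ℕ}

theorem aeval_quotient_mk (I : Ideal OL) (f : OK[X]) :
    aeval (Ideal.Quotient.mk I πL) f = Ideal.Quotient.mk I (aeval πL f) :=
  aeval_algHom_apply (Ideal.Quotient.mkₐ OK I) πL f

theorem aeval_quotient_mk_surjective
    (hres : ∀ r : OL, ∃ a : OK, r - algebraMap OK OL a ∈ Ideal.span {πL}) :
    Function.Surjective (aeval (Ideal.Quotient.mk (Ideal.span {πL ^ N}) πL) :
      OK[X] →ₐ[OK] OL ⧸ Ideal.span {πL ^ N}) := by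
  intro b
  obtain ⟨r, rfl⟩ := Ideal.Quotient.mk_surjective b
  obtain ⟨f, hf⟩ := exists_aeval_sub_mem_span_pow hres N r
  exact ⟨f, by rw [aeval_quotient_mk, Ideal.Quotient.eq, ← neg_sub]; exact neg_mem hf⟩

theorem ker_aeval_quotient_mk [IsDomain OK] [IsDiscreteValuationRing OK] [IsDomain OL]
    {πK : OK} (hπK : Irreducible πK) (hπL : Irreducible πL) {n : ℕ} (hn : 0 < n) {G : OK[X]}
    (hG : X ^ n ∣ G + C πK) (hGN : aeval πL G ∈ Ideal.span {πL ^ N}) :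
    RingHom.ker (aeval (Ideal.Quotient.mk (Ideal.span {πL ^ N}) πL) :
      OK[X] →ₐ[OK] OL ⧸ Ideal.span {πL ^ N}) = Ideal.span {G, X ^ N} := by
  refine le_antisymm (fun f hf => ?_) ?_
  · rw [RingHom.mem_ker, aeval_quotient_mk, Ideal.Quotient.eq_zero_iff_mem] at hf
    exact mem_span_of_aeval_mem_span_pow hπK hπL hn hG hGN le_rfl hf
  · rw [Ideal.span_le, Set.insert_subset_iff, Set.singleton_subset_iff]
    simp only [SetLike.mem_coe, RingHom.mem_ker, aeval_quotient_mk,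
      Ideal.Quotient.eq_zero_iff_mem]
    exact ⟨hGN, by simp⟩

theorem mem_span_quotient_mk_of_not_isUnit [IsDomain OL] [IsDiscreteValuationRing OL]
    (hπL : Irreducible πL) {b : OL ⧸ Ideal.span {πL ^ N}} (hb : ¬IsUnit b) :
    b ∈ Ideal.span {Ideal.Quotient.mk _ πL} := by
  obtain ⟨r, rfl⟩ := Ideal.Quotient.mk_surjective b
  have hr : r ∈ IsLocalRing.maximalIdeal OL :=
    (IsLocalRing.mem_maximalIdeal _).mpr fun hu => hb (hu.map _)
  obtain ⟨s, rfl⟩ := Ideal.mem_span_singleton.mp (hπL.maximalIdeal_eq ▸ hr)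
  exact Ideal.mem_span_singleton.mpr ⟨_, map_mul _ _ _⟩

theorem quotient_mk_pow_not_mem_span_mul [IsDomain OL] (hπL : Irreducible πL) {k : ℕ}
    (hk : k < N) :
    Ideal.Quotient.mk (Ideal.span {πL ^ N}) (πL ^ k) ∉
      Ideal.span {Ideal.Quotient.mk _ (πL ^ k) * Ideal.Quotient.mk _ πL} := by
  intro h
  obtain ⟨t, ht⟩ := Ideal.mem_span_singleton.mp h
  obtain ⟨r, rfl⟩ := Ideal.Quotient.mk_surjective t
  rw [← map_mul, ← map_mul, Ideal.Quotient.eq, Ideal.mem_span_singleton] at ht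
  obtain ⟨y, hy⟩ := ht
  have hN : πL ^ N = πL ^ k * (πL * πL ^ (N - k - 1)) := by
    rw [← pow_succ', ← pow_add]; congr 1; omega
  have hunit : πL * (r + πL ^ (N - k - 1) * y) = 1 :=
    mul_left_cancel₀ (pow_ne_zero k hπL.ne_zero) (by linear_combination -hy - y * hN)
  exact hπL.not_isUnit (IsUnit.of_mul_eq_one _ hunit)

end Truncation

theorem stmt2_general
    (p : ℕ) [hp : Fact p.Prime]
    (OK : Type) [CommRing OK] [IsDomain OK] [IsDiscreteValuationRing OK]
    (OL : Type) [CommRing OL] [IsDomain OL] [IsDiscreteValuationRing OL]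
    [Algebra OK OL]
    (n : ℕ) (hn1 : 1 < n)
    (πK : OK) (hπK : Irreducible πK) (πL : OL) (hπL : Irreducible πL)
    (hres : ∀ x : OL, ∃ y : OK, x - algebraMap OK OL y ∈ IsLocalRing.maximalIdeal OL)
    -- the data of the proposition
    (j : ℕ) (c d : ℕ) (hcd : c ≤ d)
    (u : (EpsRing OL (p ^ (j + 1)))ˣ)
    (F : PowerSeries OK) (hFn : ∀ i < n, PowerSeries.coeff i F = 0)
    (hFeval : ∀ N : ℕ,
      algebraMap OK OL πK
          - ∑ i ∈ Finset.range N, algebraMap OK OL (PowerSeries.coeff i F) * πL ^ i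
        ∈ Ideal.span {πL ^ N}) :
    -- abbreviations
    let e : ℕ := p ^ (j + 1)
    let ι : OL →+* EpsRing OL e := epsC OL e
    let z : EpsRing OL e := ι πL + (u : EpsRing OL e) * ι (πL ^ (c + 1)) * eps OL e
    let Bd := OL ⧸ (Ideal.span {πL ^ (n + d)})
    let q : OL →+* Bd := Ideal.Quotient.mk _
    let ιB : Bd →+* EpsRing Bd e := epsC Bd e
    let Cond1 : Prop :=
      (∑ i ∈ Finset.range (n + d), ι (algebraMap OK OL (PowerSeries.coeff i F)) * z ^ i)
          - ι (algebraMap OK OL πK) ∈ Ideal.span {ι πL ^ (n + d)}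
    let Cond2 : Prop :=
      ∃ s : Bd →+* EpsRing Bd e,
        (∀ x : OK, s (q (algebraMap OK OL x)) = ιB (q (algebraMap OK OL x))) ∧
        s (q πL) = epsMap q e z
    let Cond3 : Prop :=
      ∃ s : Bd →+* EpsRing Bd e,
        (∀ x : OK, s (q (algebraMap OK OL x)) = ιB (q (algebraMap OK OL x))) ∧
        (∀ b : Bd, s b - ιB b ∈ Ideal.span {ιB (q (πL ^ (c + 1))) * eps Bd e}) ∧
        ¬ (∀ b : Bd, s b - ιB b ∈
              Ideal.span {ιB (q (πL ^ (c + 1))) * eps Bd e} *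
                Ideal.span {ιB (q πL), eps Bd e})
    (Cond1 ↔ Cond2) ∧ (Cond2 ↔ Cond3) := by
  intro e ι z Bd q ιB Cond1 Cond2 Cond3
  have he : 1 < e := Nat.one_lt_pow j.succ_ne_zero hp.out.one_lt
  set G : OK[X] := PowerSeries.trunc (n + d) F - C πK
  have hG : X ^ n ∣ G + C πK := by
    rw [sub_add_cancel, X_pow_dvd_iff]
    intro i hi
    rw [PowerSeries.coeff_trunc, hFn i hi, ite_self]
  have hGN : aeval πL G ∈ Ideal.span {πL ^ (n + d)} := by
    rw [map_sub, PowerSeries.aeval_trunc_eq_sum_range, aeval_C, ← neg_sub]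
    exact neg_mem (hFeval (n + d))
  have hx := aeval_quotient_mk_surjective (N := n + d) fun r => by
    simpa [hπL.maximalIdeal_eq] using hres r
  have hker := ker_aeval_quotient_mk hπK hπL (by omega) hG hGN
  have hz : epsMap q e z = ιB (q πL) + ιB (q πL ^ (c + 1)) * eps Bd e * epsMap q e u := by
    change epsMap q e (epsC OL e πL + u * epsC OL e (πL ^ (c + 1)) * eps OL e) = _
    rw [map_add, map_mul, map_mul, EpsRing.epsMap_epsC, EpsRing.epsMap_epsC,
      EpsRing.epsMap_eps, map_pow]
    ring
  have h12 : Cond1 ↔ Cond2 := by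
    refine Iff.symm (exists_ringHom_and_iff_exists_algHom.trans
      ((exists_algHom_apply_eq_iff_aeval_eq_zero hx hker ?_).trans
        ((EpsRing.aeval_epsMap_eq_zero_iff Ideal.Quotient.mk_surjective
          (Ideal.Quotient.mkₐ_ker OK _) z G).trans ?_)))
    · rw [hz]
      refine EpsRing.epsC_add_mul_eps_mul_pow_eq_zero ?_ c _
      rw [← map_pow]
      exact Ideal.Quotient.eq_zero_iff_mem.mpr (Ideal.mem_span_singleton_self _)
    · rw [map_sub, PowerSeries.aeval_trunc_eq_sum_range, aeval_C, map_pow]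
      rfl
  have h23 : Cond2 ↔ Cond3 := by
    refine exists_ringHom_and_iff_exists_algHom.trans
      (Iff.trans ?_ exists_ringHom_and_iff_exists_algHom.symm)
    rw [hz, ← map_pow]
    exact (exists_algHom_sub_mem_and_not_mem_mul_iff hx he
      (fun _ hb => mem_span_quotient_mk_of_not_isUnit hπL hb)
      (quotient_mk_pow_not_mem_span_mul hπL (by omega)) (u.isUnit.map (epsMap q e))).symm
  exact ⟨h12, h23⟩

/-- Proposition `series`.
`K` is a local field with perfect residue field of characteristic `p`, `L/K` a finite
separable totally ramified extension of degree `n = a·p^ν > 1` (`p ∤ a`).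
`B_d = O_L/M_L^{n+d}`, `A_d` = image of `O_K` in `B_d`, and `B_d[ε_j] = B_d[ε]/(ε^{p^{j+1}})`.
For `0 ≤ j ≤ ν`, `d ≥ c ≥ 0`, a unit `u ∈ O_L[ε_j]ˣ` and `F(X) ∈ X^n·O_K[[X]]` with
`F(π_L) = π_K`, the following are equivalent:
1. `F(π_L + u·π_L^{c+1}·ε_j) ≡ π_K (mod π_L^{n+d})`;
2. there is an `A_d`-algebra homomorphism `s_d : B_d → B_d[ε_j]` with
   `s_d(π_L) = π_L + u·π_L^{c+1}·ε_j`;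
3. there is an `A_d`-algebra homomorphism `s_d : B_d → B_d[ε_j]` with
   `s_d ≡ id (mod π_L^{c+1} ε_j)` and `s_d ≢ id (mod π_L^{c+1} ε_j·(π_L, ε_j))`. -/
theorem stmt2
    (p : ℕ) [hp : Fact p.Prime]
    (OK : Type) [CommRing OK] [IsDomain OK] [IsDiscreteValuationRing OK]
    [IsAdicComplete (IsLocalRing.maximalIdeal OK) OK]
    [CharP (IsLocalRing.ResidueField OK) p] [PerfectRing (IsLocalRing.ResidueField OK) p]
    (OL : Type) [CommRing OL] [IsDomain OL] [IsDiscreteValuationRing OL]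
    [IsAdicComplete (IsLocalRing.maximalIdeal OL) OL]
    [Algebra OK OL]
    (K L : Type) [Field K] [Field L]
    [Algebra OK K] [IsFractionRing OK K]
    [Algebra OL L] [IsFractionRing OL L]
    [Algebra K L] [Algebra OK L] [IsScalarTower OK K L] [IsScalarTower OK OL L]
    [Algebra.IsSeparable K L] [FiniteDimensional K L]
    (n a ν : ℕ) (hna : n = a * p ^ ν) (hpa : ¬ p ∣ a) (hn1 : 1 < n)
    (hdeg : Module.finrank K L = n)
    (πK : OK) (hπK : Irreducible πK) (πL : OL) (hπL : Irreducible πL)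
    (htot : Associated (algebraMap OK OL πK) (πL ^ n))
    (hres : ∀ x : OL, ∃ y : OK, x - algebraMap OK OL y ∈ IsLocalRing.maximalIdeal OL)
    -- the data of the proposition
    (j : ℕ) (hj : j ≤ ν) (c d : ℕ) (hcd : c ≤ d)
    (u : (EpsRing OL (p ^ (j + 1)))ˣ)
    (F : PowerSeries OK) (hFn : ∀ i < n, PowerSeries.coeff i F = 0)
    (hFeval : ∀ N : ℕ,
      algebraMap OK OL πK
          - ∑ i ∈ Finset.range N, algebraMap OK OL (PowerSeries.coeff i F) * πL ^ i
        ∈ Ideal.span {πL ^ N}) :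
    -- abbreviations
    let e : ℕ := p ^ (j + 1)
    let ι : OL →+* EpsRing OL e := epsC OL e
    let z : EpsRing OL e := ι πL + (u : EpsRing OL e) * ι (πL ^ (c + 1)) * eps OL e
    let Bd := OL ⧸ (Ideal.span {πL ^ (n + d)})
    let q : OL →+* Bd := Ideal.Quotient.mk _
    let ιB : Bd →+* EpsRing Bd e := epsC Bd e
    let Cond1 : Prop :=
      (∑ i ∈ Finset.range (n + d), ι (algebraMap OK OL (PowerSeries.coeff i F)) * z ^ i)
          - ι (algebraMap OK OL πK) ∈ Ideal.span {ι πL ^ (n + d)}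
    let Cond2 : Prop :=
      ∃ s : Bd →+* EpsRing Bd e,
        (∀ x : OK, s (q (algebraMap OK OL x)) = ιB (q (algebraMap OK OL x))) ∧
        s (q πL) = epsMap q e z
    let Cond3 : Prop :=
      ∃ s : Bd →+* EpsRing Bd e,
        (∀ x : OK, s (q (algebraMap OK OL x)) = ιB (q (algebraMap OK OL x))) ∧
        (∀ b : Bd, s b - ιB b ∈ Ideal.span {ιB (q (πL ^ (c + 1))) * eps Bd e}) ∧
        ¬ (∀ b : Bd, s b - ιB b ∈
              Ideal.span {ιB (q (πL ^ (c + 1))) * eps Bd e} *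
                Ideal.span {ιB (q πL), eps Bd e})
    (Cond1 ↔ Cond2) ∧ (Cond2 ↔ Cond3) :=
  stmt2_general p (hp := hp) OK OL n hn1 πK hπK πL hπL hres j c d hcd u F hFn hFeval
end
end

section
/- Let p be a prime and let j, μ ≥ 0 be integers. In the polynomial ring ℤ[X_0, X_1, …, X_μ], one has the congruence (X_0 + X_1 + ⋯ + X_μ)^{p^j} ≡ X_0^{p^j} + X_1^{p^j} + ⋯ + X_μ^{p^j} modulo the ideal H_j' generated by the elements p^h · X_k^{p^{j−h}} · X_w for 1 ≤ h ≤ j, 0 ≤ k ≤ μ, 0 ≤ w ≤ μ. -/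
/-!
Induction on `j`. Writing `(∑ xᵢ)^(p^(j+1)) = (T + E)^p` with `T = ∑ xᵢ^(p^j)` and `E ∈ H_j'`,
the terms of `(T + E)^p - T^p` lie in `H_{j+1}'` because `p • H_j'` and `H_j' * H_j'` do (every
generator of `H_j'` is divisible by `p`), and `T^p ≡ ∑ xᵢ^(p^(j+1))` because the cross terms of
`T^p` are multiples of `p xₖ^(p^j) x_w^(p^j)`, a multiple of the generator `p xₖ^(p^j) x_w`.
-/

open MvPolynomial Finset

section PrimePow

variable {R : Type*} [CommRing R] {p : ℕ}

theorem add_pow_prime_sub_pow_mem (hp : p.Prime) {I : Ideal R} {a e : R}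
    (hpe : (p : R) * e ∈ I) (hee : e * e ∈ I) : (a + e) ^ p - a ^ p ∈ I := by
  obtain ⟨r, hr⟩ := exists_add_pow_prime_eq hp a e
  have hep : e ^ p = e * e * e ^ (p - 2) := by
    rw [← pow_two, ← pow_add, Nat.add_sub_cancel' hp.two_le]
  have key : (a + e) ^ p - a ^ p = e * e * e ^ (p - 2) + (p * e) * (a * r) := by
    rw [hr, hep]; ring
  rw [key]
  exact I.add_mem (I.mul_mem_right _ hee) (I.mul_mem_right _ hpe)

theorem sum_pow_prime_sub_sum_pow_mem {ι : Type*} (hp : p.Prime) {I : Ideal R}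
    (s : Finset ι) (f : ι → R) (hI : ∀ i ∈ s, ∀ k ∈ s, (p : R) * f i * f k ∈ I) :
    (∑ i ∈ s, f i) ^ p - ∑ i ∈ s, f i ^ p ∈ I := by
  classical
  induction s using Finset.induction with
  | empty => simp [zero_pow hp.ne_zero]
  | insert a s ha ih =>
    obtain ⟨r, hr⟩ := exists_add_pow_prime_eq hp (f a) (∑ i ∈ s, f i)
    have hcross : (p : R) * f a * ∑ i ∈ s, f i ∈ I := by
      rw [mul_sum]
      exact I.sum_mem fun k hk ↦ hI a (mem_insert_self a s) k (mem_insert_of_mem hk)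
    have key : (∑ i ∈ insert a s, f i) ^ p - ∑ i ∈ insert a s, f i ^ p =
        ((∑ i ∈ s, f i) ^ p - ∑ i ∈ s, f i ^ p) + (p * f a * ∑ i ∈ s, f i) * r := by
      rw [sum_insert ha, sum_insert ha, hr]; ring
    rw [key]
    refine I.add_mem (ih fun i hi k hk ↦ ?_) (I.mul_mem_right _ hcross)
    exact hI i (mem_insert_of_mem hi) k (mem_insert_of_mem hk)

end PrimePow

section FrobeniusIdeal

variable {R ι : Type*} [CommRing R]

/-- The ideal `H_j'`, for an arbitrary family `x` in place of the variables `X_k`. -/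
def frobeniusIdeal (p : ℕ) (x : ι → R) (j : ℕ) : Ideal R :=
  Ideal.span {f | ∃ h : ℕ, ∃ k w : ι, 1 ≤ h ∧ h ≤ j ∧ f = (p : R) ^ h * x k ^ (p ^ (j - h)) * x w}

variable {p : ℕ} {x : ι → R} {j : ℕ}

theorem pow_mul_pow_mul_mem_frobeniusIdeal {h : ℕ} (h1 : 1 ≤ h) (hj : h ≤ j) (k w : ι) :
    (p : R) ^ h * x k ^ (p ^ (j - h)) * x w ∈ frobeniusIdeal p x j :=
  Ideal.subset_span ⟨h, k, w, h1, hj, rfl⟩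

theorem frobeniusIdeal_le_span_singleton : frobeniusIdeal p x j ≤ Ideal.span {(p : R)} := by
  refine Ideal.span_le.2 ?_
  rintro _ ⟨h, k, w, h1, -, rfl⟩
  exact Ideal.mem_span_singleton.2 ((dvd_pow_self _ (by omega)).mul_right _ |>.mul_right _)

theorem natCast_mul_mem_frobeniusIdeal_succ {e : R} (he : e ∈ frobeniusIdeal p x j) :
    (p : R) * e ∈ frobeniusIdeal p x (j + 1) := by
  induction he using Submodule.span_induction with
  | mem f hf =>
    obtain ⟨h, k, w, h1, hj, rfl⟩ := hf
    have key : (p : R) * (p ^ h * x k ^ (p ^ (j - h)) * x w) =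
        p ^ (h + 1) * x k ^ (p ^ (j + 1 - (h + 1))) * x w := by
      rw [Nat.add_sub_add_right]; ring
    rw [key]
    exact pow_mul_pow_mul_mem_frobeniusIdeal (by omega) (by omega) k w
  | zero => simp
  | add e e' _ _ he he' => rw [mul_add]; exact Ideal.add_mem _ he he'
  | smul a e _ he => rw [smul_eq_mul, mul_left_comm]; exact Ideal.mul_mem_left _ a he

theorem mul_mem_frobeniusIdeal_succ {e e' : R} (he : e ∈ frobeniusIdeal p x j)
    (he' : e' ∈ frobeniusIdeal p x j) : e * e' ∈ frobeniusIdeal p x (j + 1) := by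
  obtain ⟨c, rfl⟩ := Ideal.mem_span_singleton.1 (frobeniusIdeal_le_span_singleton he')
  rw [mul_left_comm, ← mul_assoc]
  exact Ideal.mul_mem_right _ _ (natCast_mul_mem_frobeniusIdeal_succ he)

theorem natCast_mul_pow_mul_pow_mem_frobeniusIdeal_succ (hp : p ≠ 0) (k w : ι) :
    (p : R) * x k ^ p ^ j * x w ^ p ^ j ∈ frobeniusIdeal p x (j + 1) := by
  have hgen := pow_mul_pow_mul_mem_frobeniusIdeal (p := p) (x := x) (j := j + 1) le_rfl (by omega) k w
  rw [pow_one, Nat.add_sub_cancel] at hgen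
  have key : (p : R) * x k ^ p ^ j * x w ^ p ^ j =
      (p * x k ^ p ^ j * x w) * x w ^ (p ^ j - 1) := by
    rw [mul_assoc _ (x w), ← pow_succ', Nat.sub_add_cancel (Nat.one_le_pow _ _ hp.bot_lt)]
  rw [key]
  exact Ideal.mul_mem_right _ _ hgen

theorem sum_pow_prime_pow_sub_sum_pow_mem_frobeniusIdeal [Fintype ι] (hp : p.Prime) (j : ℕ) :
    (∑ i, x i) ^ p ^ j - ∑ i, x i ^ p ^ j ∈ frobeniusIdeal p x j := by
  induction j with
  | zero => simp
  | succ j ih =>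
    set T := ∑ i, x i ^ p ^ j
    set E := (∑ i, x i) ^ p ^ j - T
    have hsum : (∑ i, x i) ^ p ^ (j + 1) = (T + E) ^ p := by
      rw [add_sub_cancel, ← pow_mul, ← pow_succ]
    have hTE : (T + E) ^ p - T ^ p ∈ frobeniusIdeal p x (j + 1) :=
      add_pow_prime_sub_pow_mem hp (natCast_mul_mem_frobeniusIdeal_succ ih)
        (mul_mem_frobeniusIdeal_succ ih ih)
    have hT : T ^ p - ∑ i, (x i ^ p ^ j) ^ p ∈ frobeniusIdeal p x (j + 1) :=
      sum_pow_prime_sub_sum_pow_mem hp _ _ fun k _ w _ ↦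
        natCast_mul_pow_mul_pow_mem_frobeniusIdeal_succ hp.ne_zero k w
    simp_rw [← pow_mul, ← pow_succ] at hT
    rw [hsum, ← sub_add_sub_cancel _ (T ^ p)]
    exact Ideal.add_mem _ hTE hT

end FrobeniusIdeal

/-- Let `p` be a prime and `j, μ ≥ 0` integers.  In the polynomial
ring `ℤ[X_0, …, X_μ]` one has
`(X_0 + ⋯ + X_μ)^(p^j) ≡ X_0^(p^j) + ⋯ + X_μ^(p^j)` modulo the ideal `H_j'`
generated by the elements `p^h · X_k^(p^(j-h)) · X_w` for `1 ≤ h ≤ j` and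
`0 ≤ k, w ≤ μ`. -/
theorem stmt17 (p : ℕ) (hp : p.Prime) (j μ : ℕ) :
    (∑ i : Fin (μ + 1), (X i : MvPolynomial (Fin (μ + 1)) ℤ)) ^ (p ^ j) -
      ∑ i : Fin (μ + 1), (X i : MvPolynomial (Fin (μ + 1)) ℤ) ^ (p ^ j) ∈
    Ideal.span { f : MvPolynomial (Fin (μ + 1)) ℤ |
      ∃ h : ℕ, ∃ k w : Fin (μ + 1), 1 ≤ h ∧ h ≤ j ∧
        f = (p : MvPolynomial (Fin (μ + 1)) ℤ) ^ h * (X k) ^ (p ^ (j - h)) * X w } :=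
  sum_pow_prime_pow_sub_sum_pow_mem_frobeniusIdeal (x := X) hp j
end
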